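/- arXiv:2405.17854 — 3 statements merged into one kernel-verified Lean document; each statement's English description precedes it below -/
import Mathlib

section
/- For 1 ≤ i ≤ 2n, the element v_i of the Weyl group of type C_n defined by v_i = s_i⋯s_{n-1}s_n s_{n-1}⋯s_2 s_1 for 1 ≤ i ≤ n, v_i = s_{2n-i}⋯s_2 s_1 for n+1 ≤ i ≤ 2n-1, and v_{2n} = 1, has length ℓ(v_i) = 2n - i. -/
/-!
`W(C_n)` acts on `±{1, …, n} ⊆ ℤ` by signed permutations, `s_i` (`i < n`) swapping `i` and `i + 1`
(and `-i`, `-(i + 1)`) and `s_n` negating `n`. Each generator moves an entry by at most one step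
along the path `1, 2, …, n, -n, …, -1`, so the position of `w(1)` on this path bounds `ℓ(w)` from
below. Reading the word of `v_i` from the right, `1` walks along the path to `-i` (or to
`2n - i + 1` when `i > n`), which is at position `2n - i`, the length of the word.
-/

/-- The Coxeter matrix of type `C_n` on `Fin n` (vertex `k` is the simple reflection
`s_{k+1}`); the bond between `s_{n-1}` and `s_n` is labelled `4`, consecutive bonds `3`. -/
def cMatC (n : ℕ) : CoxeterMatrix (Fin n) where
  M i j :=
    if i = j then 1
    else if (i : ℕ) + 1 = j ∨ (j : ℕ) + 1 = i then
      (if (i : ℕ) + (j : ℕ) = 2 * n - 3 then 4 else 3)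
    else 2
  isSymm := by
    ext i j
    show (if j = i then 1
      else if (j : ℕ) + 1 = i ∨ (i : ℕ) + 1 = j then
        (if (j : ℕ) + (i : ℕ) = 2 * n - 3 then 4 else 3)
      else 2) = (if i = j then 1
      else if (i : ℕ) + 1 = j ∨ (j : ℕ) + 1 = i then
        (if (i : ℕ) + (j : ℕ) = 2 * n - 3 then 4 else 3)
      else 2)
    rcases eq_or_ne i j with h | h
    · simp [h]
    · simp only [if_neg h, if_neg (Ne.symm h)]
      by_cases h1 : (i : ℕ) + 1 = j ∨ (j : ℕ) + 1 = i
      · simp [h1, h1.symm, Nat.add_comm]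
      · have h2 : ¬((j : ℕ) + 1 = i ∨ (i : ℕ) + 1 = j) := fun hh => h1 hh.symm
        simp [h1, h2]
  diagonal i := by simp
  off_diagonal i j h := by
    simp only [if_neg h]
    split_ifs <;> omega

/-- The Coxeter system of type `C_n`. -/
noncomputable def csC (n : ℕ) : CoxeterSystem (cMatC n) (cMatC n).Group :=
  (cMatC n).toCoxeterSystem

/-- Index conversion: the 1-indexed generator `s_i` corresponds to `⟨i-1⟩ : Fin n`. -/
def idxF (n : ℕ) (hn : 0 < n) (i : ℕ) : Fin n := ⟨(i - 1) % n, Nat.mod_lt _ hn⟩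


/-- Reduced word of `v_i`. -/
def vword (n i : ℕ) : List ℕ :=
  if i ≤ n then List.range' i (n - i + 1) ++ (List.range' 1 (n - 1)).reverse
  else (List.range' 1 (2 * n - i)).reverse

/-- Word of `u_k = s_{n+1-k} ⋯ s_{n-1} s_n`. -/
def uwordC (n k : ℕ) : List ℕ := List.range' (n + 1 - k) k

/-- Word of `ρ_i`. -/
def rhoWord (n i : ℕ) : List ℕ :=
  if i ≤ n then (List.range i).reverse
  else List.range' (2 * n - i + 1) (i - n) ++ (List.range n).reverse

/-- The set `𝒫^n_C`: partitions with parts in `(0, 2n]`, parts `< n` strictly decreasing. -/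
def PCset (n : ℕ) : Set (List ℕ) :=
  {L | L.Chain' (fun a b => b ≤ a ∧ (a < n → b < a)) ∧ ∀ x ∈ L, 0 < x ∧ x ≤ 2 * n}

/-- The set `𝒮𝒫(n)` of strict partitions with parts at most `n`. -/
def SPset (n : ℕ) : Set (List ℕ) :=
  {L | L.Chain' (fun a b => b < a) ∧ ∀ x ∈ L, 0 < x ∧ x ≤ n}

/-- `λ ↦ λ^* = (n+1-λ_l, …, n+1-λ_1)`. -/
def starSP (n : ℕ) (L : List ℕ) : List ℕ := (L.map (fun k => n + 1 - k)).reverse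

open Equiv

theorem CoxeterSystem.le_length_of_simple_mul_le {B W : Type*} [Group W] {M : CoxeterMatrix B}
    (cs : CoxeterSystem M W) (f : W → ℕ) (h_one : f 1 = 0)
    (h_simple : ∀ i w, f (cs.simple i * w) ≤ f w + 1) (w : W) : f w ≤ cs.length w := by
  have h_word : ∀ ω : List B, f (cs.wordProd ω) ≤ ω.length := by
    intro ω
    induction ω with
    | nil => simp [h_one]
    | cons i ω ih =>
      rw [cs.wordProd_cons, List.length_cons]
      exact (h_simple i _).trans (Nat.add_le_add_right ih 1)
  obtain ⟨ω, hω, rfl⟩ := cs.exists_isReduced w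
  exact hω ▸ h_word ω

theorem pow_mul_eq_one_of_pow_mul_eq_one {G : Type*} [Group G] {a b : G} {m : ℕ}
    (h : (b * a) ^ m = 1) : (a * b) ^ m = 1 := by
  have h' := mul_pow_mul a b m
  rw [h, mul_one] at h'
  exact mul_right_cancel (h'.trans (one_mul a).symm)

/-- Vertex `k`, i.e. `s_{k+1}`, as a signed permutation of `ℤ`. -/
def signedSimple (n k : ℕ) (x : ℤ) : ℤ :=
  if k + 2 ≤ n then
    if x = k + 1 then k + 2 else if x = k + 2 then k + 1
    else if x = -(k + 1) then -(k + 2) else if x = -(k + 2) then -(k + 1) else x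
  else if x = k + 1 then -(k + 1) else if x = -(k + 1) then k + 1 else x

theorem signedSimple_involutive (n k : ℕ) : Function.Involutive (signedSimple n k) := by
  intro x
  grind [signedSimple]

theorem signedSimple_braid_two (n k l : ℕ) (hkl : k + 2 ≤ l) (x : ℤ) :
    signedSimple n k (signedSimple n l (signedSimple n k (signedSimple n l x))) = x := by
  grind (splits := 100) [signedSimple]

theorem signedSimple_braid_three (n k : ℕ) (hk : k + 3 ≤ n) (x : ℤ) :
    signedSimple n k (signedSimple n (k + 1) (signedSimple n k (signedSimple n (k + 1)
      (signedSimple n k (signedSimple n (k + 1) x))))) = x := by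
  grind (splits := 100) [signedSimple]

theorem signedSimple_braid_four (n k : ℕ) (hk : k + 2 = n) (x : ℤ) :
    signedSimple n k (signedSimple n (k + 1) (signedSimple n k (signedSimple n (k + 1)
      (signedSimple n k (signedSimple n (k + 1) (signedSimple n k (signedSimple n (k + 1) x)))))))
      = x := by
  grind (splits := 100) [signedSimple]

def signedSimplePerm (n : ℕ) (k : Fin n) : Perm ℤ :=
  (signedSimple_involutive n k).toPerm

@[simp]
theorem signedSimplePerm_apply (n : ℕ) (k : Fin n) (x : ℤ) :
    signedSimplePerm n k x = signedSimple n k x := rfl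

theorem isLiftable_signedSimplePerm (n : ℕ) : (cMatC n).IsLiftable (signedSimplePerm n) := by
  intro i j
  wlog hij : i ≤ j generalizing i j
  · rw [(cMatC n).symmetric]
    exact pow_mul_eq_one_of_pow_mul_eq_one (this j i (le_of_not_ge hij))
  ext x
  have hj := j.isLt
  simp only [cMatC]
  split_ifs with h_eq h_adj h_top <;>
    simp only [pow_succ, pow_zero, one_mul, Perm.mul_apply, signedSimplePerm_apply,
      Perm.one_apply]
  · rw [h_eq]; exact signedSimple_involutive n j x
  · have hj' : (j : ℕ) = i + 1 := by omega
    rw [hj']; exact signedSimple_braid_four n i (by omega) x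
  · have hj' : (j : ℕ) = i + 1 := by omega
    rw [hj']; exact signedSimple_braid_three n i (by omega) x
  · exact signedSimple_braid_two n i j (by omega) x

noncomputable def signedRep (n : ℕ) : (cMatC n).Group →* Perm ℤ :=
  (csC n).lift ⟨signedSimplePerm n, isLiftable_signedSimplePerm n⟩

theorem signedRep_simple_apply (n : ℕ) (k : Fin n) (x : ℤ) :
    signedRep n ((csC n).simple k) x = signedSimple n k x := by
  rw [signedRep, (csC n).lift_apply_simple]
  rfl

/-- The position of `x` on the path `1, 2, …, n, -n, …, -1`, along which each simple reflection
moves an entry by at most one step. -/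
def pathPos (n : ℕ) (x : ℤ) : ℕ := (if 0 < x then x - 1 else 2 * n + x).toNat

theorem pathPos_signedSimple_le (n k : ℕ) (hk : k < n) (x : ℤ) :
    pathPos n (signedSimple n k x) ≤ pathPos n x + 1 := by
  unfold pathPos signedSimple
  split_ifs <;> omega

theorem pathPos_signedRep_le_length (n : ℕ) (w : (cMatC n).Group) :
    pathPos n (signedRep n w 1) ≤ (csC n).length w := by
  refine (csC n).le_length_of_simple_mul_le (fun w => pathPos n (signedRep n w 1)) rfl
    (fun k w => ?_) w
  rw [map_mul, Perm.mul_apply, signedRep_simple_apply]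
  exact pathPos_signedSimple_le n k k.isLt _

theorem idxF_val (n : ℕ) (hn : 0 < n) {i : ℕ} (hi : i ≤ n) : (idxF n hn i : ℕ) = i - 1 :=
  Nat.mod_eq_of_lt (by omega)

theorem signedRep_wordProd_descending (n : ℕ) (hn : 0 < n) {m : ℕ} (hm : m < n) :
    signedRep n ((csC n).wordProd (((List.range' 1 m).reverse).map (idxF n hn))) 1 = m + 1 := by
  induction m with
  | zero => simp
  | succ m ih =>
    rw [List.range'_concat, List.reverse_append, List.reverse_singleton, List.singleton_append,
      List.map_cons, CoxeterSystem.wordProd_cons, map_mul, Perm.mul_apply, ih (by omega),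
      signedRep_simple_apply, idxF_val n hn (by omega)]
    simp only [signedSimple]
    split_ifs <;> omega

theorem signedRep_wordProd_ascending (n : ℕ) (hn : 0 < n) {i c : ℕ} (hi : 1 ≤ i)
    (hic : i + c = n) :
    signedRep n ((csC n).wordProd ((List.range' i (c + 1)).map (idxF n hn))) n = -i := by
  induction c generalizing i with
  | zero =>
    rw [List.range'_one, List.map_singleton, CoxeterSystem.wordProd_singleton,
      signedRep_simple_apply, idxF_val n hn (by omega)]
    simp only [signedSimple]
    split_ifs <;> omega
  | succ c ih =>
    rw [List.range'_succ, List.map_cons, CoxeterSystem.wordProd_cons, map_mul, Perm.mul_apply,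
      ih (by omega) (by omega), signedRep_simple_apply, idxF_val n hn (by omega)]
    simp only [signedSimple]
    split_ifs <;> omega

theorem length_vword (n i : ℕ) (hn : 0 < n) : (vword n i).length = 2 * n - i := by
  unfold vword
  split_ifs
  · simp only [List.length_append, List.length_reverse, List.length_range']
    omega
  · simp only [List.length_reverse, List.length_range']

theorem pathPos_signedRep_vword (n i : ℕ) (hn : 0 < n) (hi : 1 ≤ i) :
    pathPos n (signedRep n ((csC n).wordProd ((vword n i).map (idxF n hn))) 1) = 2 * n - i := by
  unfold vword
  split_ifs with hin
  · rw [List.map_append, CoxeterSystem.wordProd_append, map_mul, Perm.mul_apply,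
      signedRep_wordProd_descending n hn (by omega : n - 1 < n), Nat.cast_sub hn, Nat.cast_one,
      sub_add_cancel, signedRep_wordProd_ascending n hn hi (by omega)]
    unfold pathPos
    split_ifs <;> omega
  · rw [signedRep_wordProd_descending n hn (by omega)]
    unfold pathPos
    split_ifs <;> omega

/-- `ℓ(v_i) = 2n - i` for `1 ≤ i ≤ 2n`. -/
theorem stmt1 (n i : ℕ) (hn : 2 ≤ n) (h1 : 1 ≤ i) :
    (csC n).length ((csC n).wordProd ((vword n i).map (idxF n (by omega))))
      = 2 * n - i := by
  have hn0 : 0 < n := by omega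
  apply le_antisymm
  · calc _ ≤ ((vword n i).map (idxF n hn0)).length := (csC n).length_wordProd_le _
      _ = 2 * n - i := by rw [List.length_map, length_vword n i hn0]
  · rw [← pathPos_signedRep_vword n i hn0 h1]
    exact pathPos_signedRep_le_length n _
end

section
/- Let λ = (λ_1, …, λ_l) ∈ 𝒫^n_C and set x_λ = ρ_{λ_l}⋯ρ_{λ_1} in the affine Weyl group of type C_n^{(1)}. Write x_λ = v(λ) t_{-ξ(λ)} with v(λ) ∈ W and ξ(λ) ∈ Q^∨. Then v(λ) = v_{λ_l}⋯v_{λ_2} v_{λ_1} and ξ(λ) = ε_1 + v_{λ_1}^{-1}ε_1 + v_{λ_1}^{-1}v_{λ_2}^{-1}ε_1 + ⋯ + v_{λ_1}^{-1}⋯v_{λ_{l-1}}^{-1}ε_1. -/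
/-!
Each `ρ_i` equals `v_i t_{-ε_1}`: for `i ≤ n` the prefix `s_{i-1}⋯s_1` cancels against the start
of `s_θ = s_1⋯s_{n-1}s_n s_{n-1}⋯s_1`, and for `i > n` the word `s_{2n-i+1}⋯s_n s_{n-1}⋯s_1`
cancels against `s_θ` down to `s_{2n-i}⋯s_1`, using `s_k² = 1`. Moving every translation to the
right with `t_ξ w = w t_{w⁻¹ξ}` then gives `x_λ = v(λ) t_{-ξ(λ)}` by induction on the number of
parts.
-/

/-- `V n = X^∨ = ⊕ ℤ ε_j` -/
abbrev V (n : ℕ) := Fin n → ℤ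

/-- `ε_i` (1-indexed). -/
def eps (n i : ℕ) : V n := fun j => if (j : ℕ) + 1 = i then 1 else 0

/-- simple coroot `α_i^∨` (1-indexed): `ε_i - ε_{i+1}` for `i < n`, `ε_n` for `i = n`. -/
def alphaV (n i : ℕ) : V n := if i = n then eps n n else eps n i - eps n (i+1)

/-- The simple reflection `s_i` (1 ≤ i ≤ n) of the Weyl group of type `C_n`,
realized as a (signed) permutation of `V n`. -/
def sC (n i : ℕ) : Equiv.Perm (V n) :=
  if h : 1 ≤ i ∧ i < n then
    Equiv.arrowCongr (Equiv.swap (⟨i - 1, by omega⟩ : Fin n) ⟨i, h.2⟩) (Equiv.refl ℤ)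
  else if i = n then
    Equiv.piCongrRight (fun j => if (j : ℕ) + 1 = n then Equiv.neg ℤ else Equiv.refl ℤ)
  else 1

/-- Product of the simple reflections along a list of (1-indexed) indices. -/
def wprod (n : ℕ) (L : List ℕ) : Equiv.Perm (V n) := (L.map (sC n)).prod

/-- Translation element `t_ξ : x ↦ x + ξ`. -/
def tE (n : ℕ) (ξ : V n) : Equiv.Perm (V n) := Equiv.addRight ξ

/-- `v_i`. -/
def vC (n i : ℕ) : Equiv.Perm (V n) := wprod n (vword n i)

/-- `u_k`. -/
def uC (n k : ℕ) : Equiv.Perm (V n) := wprod n (uwordC n k)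

/-- Word of `s_θ = s_1 ⋯ s_{n-1} s_n s_{n-1} ⋯ s_1`. -/
def thetaWord (n : ℕ) : List ℕ := List.range' 1 n ++ (List.range' 1 (n - 1)).reverse

/-- Affine simple reflections: `s_0 = s_θ t_{-ε_1}`, and `s_i = sC n i` for `i ≥ 1`;
realized as permutations (affine transformations) of `V n`. -/
def sAf (n i : ℕ) : Equiv.Perm (V n) :=
  if i = 0 then wprod n (thetaWord n) * tE n (-(eps n 1)) else sC n i

/-- `ρ_i`. -/
def rhoC (n i : ℕ) : Equiv.Perm (V n) := ((rhoWord n i).map (sAf n)).prod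

/-- `x_λ = ρ_{λ_l} ⋯ ρ_{λ_1}`. -/
def xlam (n : ℕ) (L : List ℕ) : Equiv.Perm (V n) := (L.reverse.map (rhoC n)).prod

/-- `v(λ) = v_{λ_l} ⋯ v_{λ_1}`. -/
def vlamP (n : ℕ) (L : List ℕ) : Equiv.Perm (V n) := (L.reverse.map (vC n)).prod

/-- `u_λ = u_{λ_l} ⋯ u_{λ_1}`. -/
def ulamP (n : ℕ) (L : List ℕ) : Equiv.Perm (V n) := (L.reverse.map (uC n)).prod

open Finset

namespace Equiv.Perm

variable {A : Type*} [AddCommGroup A]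

theorem addRight_mul_eq_mul_addRight {σ : Perm A} (hσ : ∀ x y, σ (x + y) = σ x + σ y) (ξ : A) :
    Equiv.addRight ξ * σ = σ * Equiv.addRight (σ⁻¹ ξ) := by
  ext x : 1
  simp [hσ]

theorem sum_inv_prod_take_cons {ι : Type*} (f : ι → Perm A)
    (hf : ∀ a x y, f a (x + y) = f a x + f a y) (e : A) (a : ι) (L : List ι) :
    ∑ i ∈ range (a :: L).length, ((((a :: L).take i).reverse.map f).prod⁻¹ e) =
      e + (f a)⁻¹ (∑ i ∈ range L.length, (((L.take i).reverse.map f).prod⁻¹ e)) := by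
  rw [List.length_cons, sum_range_succ', add_comm]
  simp only [List.take_succ_cons, List.reverse_cons, List.map_append, List.prod_append,
    List.map_singleton, List.prod_singleton, mul_inv_rev, coe_mul, Function.comp_apply]
  rw [show ⇑(f a)⁻¹ = (AddEquiv.mk' (f a) (hf a)).symm from rfl, map_sum]
  simp

theorem prod_map_mul_addRight {ι : Type*} (f : ι → Perm A)
    (hf : ∀ a x y, f a (x + y) = f a x + f a y) (e : A) (L : List ι) :
    (L.reverse.map fun a => f a * Equiv.addRight (-e)).prod =
      (L.reverse.map f).prod *
        Equiv.addRight (-∑ i ∈ range L.length, (((L.take i).reverse.map f).prod⁻¹ e)) := by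
  induction L with
  | nil => simp
  | cons a L ih =>
    have hinv : (f a)⁻¹ (-∑ i ∈ range L.length, (((L.take i).reverse.map f).prod⁻¹ e)) =
        -(f a)⁻¹ (∑ i ∈ range L.length, (((L.take i).reverse.map f).prod⁻¹ e)) :=
      map_neg (AddEquiv.mk' (f a) (hf a)).symm _
    simp only [List.reverse_cons, List.map_append, List.prod_append, List.map_singleton,
      List.prod_singleton, ih, sum_inv_prod_take_cons f hf, neg_add, Equiv.addRight_add]
    rw [mul_assoc, ← mul_assoc (Equiv.addRight _), addRight_mul_eq_mul_addRight (hf a), hinv]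
    group

end Equiv.Perm

theorem List.reverse_range_eq_of_pos {m : ℕ} (hm : 1 ≤ m) :
    (List.range m).reverse = (List.range' 1 (m - 1)).reverse ++ [0] := by
  obtain ⟨k, rfl⟩ : ∃ k, m = k + 1 := ⟨m - 1, by omega⟩
  simp [List.range_eq_range', List.range'_succ]

theorem List.range'_eq_append_range' {s m k : ℕ} (h : k ≤ m) :
    List.range' s m = List.range' s k ++ List.range' (s + k) (m - k) := by
  rw [List.range'_append_1, Nat.add_sub_cancel' h]

section WeylGroup

variable (n : ℕ)

theorem sC_map_add (i : ℕ) (x y : V n) : sC n i (x + y) = sC n i x + sC n i y := by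
  unfold sC
  split_ifs
  · rfl
  · funext j
    by_cases hj : (j : ℕ) + 1 = n <;> simp [Equiv.piCongrRight, hj, add_comm]
  · rfl

theorem sC_mul_self (i : ℕ) : sC n i * sC n i = 1 := by
  ext x j : 2
  unfold sC
  split_ifs
  · simp [Equiv.arrowCongr]
  · by_cases hj : (j : ℕ) + 1 = n <;> simp [Equiv.piCongrRight, hj]
  · rfl

theorem sC_inv (i : ℕ) : (sC n i)⁻¹ = sC n i :=
  inv_eq_of_mul_eq_one_right (sC_mul_self n i)

theorem wprod_append (L M : List ℕ) : wprod n (L ++ M) = wprod n L * wprod n M := by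
  simp [wprod]

theorem wprod_reverse (L : List ℕ) : wprod n L.reverse = (wprod n L)⁻¹ := by
  induction L with
  | nil => simp [wprod]
  | cons a L ih =>
    rw [List.reverse_cons, wprod_append, ih]
    simp [wprod, sC_inv]

theorem wprod_map_add (L : List ℕ) (x y : V n) :
    wprod n L (x + y) = wprod n L x + wprod n L y := by
  induction L with
  | nil => rfl
  | cons a L ih =>
    simp only [wprod, List.map_cons, List.prod_cons, Equiv.Perm.mul_apply] at ih ⊢
    rw [ih, sC_map_add]

theorem prod_map_sAf_append_zero (W : List ℕ) (hW : ∀ a ∈ W, a ≠ 0) :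
    ((W ++ [0]).map (sAf n)).prod = wprod n W * wprod n (thetaWord n) * tE n (-(eps n 1)) := by
  rw [List.map_append, List.prod_append, wprod,
    List.map_congr_left fun a ha => (by simp [sAf, hW a ha] : sAf n a = sC n a)]
  simp [sAf, mul_assoc]

theorem rhoC_eq_of_le {i : ℕ} (hi : 1 ≤ i) (hin : i ≤ n) :
    rhoC n i = vC n i * tE n (-(eps n 1)) := by
  have hsplit : List.range' 1 n = List.range' 1 (i - 1) ++ List.range' i (n - i + 1) := by
    rw [List.range'_eq_append_range' (k := i - 1) (by omega)]
    congr 2 <;> omega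
  rw [rhoC, rhoWord, if_pos hin, List.reverse_range_eq_of_pos hi,
    prod_map_sAf_append_zero n _ fun a ha => by simp at ha; omega,
    thetaWord, hsplit, vC, vword, if_pos hin]
  simp only [wprod_append, wprod_reverse]
  group

theorem rhoC_eq_of_lt {i : ℕ} (hni : n < i) (hi : i ≤ 2 * n) :
    rhoC n i = vC n i * tE n (-(eps n 1)) := by
  obtain ⟨j, hj, rfl⟩ : ∃ j < n, i = 2 * n - j := ⟨2 * n - i, by omega, by omega⟩
  set P := wprod n (List.range' 1 j)
  set Q := wprod n (List.range' (j + 1) (n - j - 1))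
  have hR : wprod n (List.range' 1 (n - 1)) = P * Q := by
    rw [← wprod_append, List.range'_eq_append_range' (k := j) (by omega)]
    congr 3 <;> omega
  have hQs : wprod n (List.range' (j + 1) (n - j)) = Q * sC n n := by
    rw [show n - j = n - j - 1 + 1 by omega, List.range'_concat, wprod_append,
      show j + 1 + 1 * (n - j - 1) = n by omega]
    simp [wprod, Q]
  have hPQs : wprod n (List.range' 1 n) = P * Q * sC n n := by
    rw [← hR, show n = n - 1 + 1 by omega, List.range'_concat, wprod_append,
      show 1 + 1 * (n - 1) = n - 1 + 1 by omega]
    simp [wprod]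
  have hj' : 2 * n - (2 * n - j) = j := by omega
  rw [rhoC, rhoWord, if_neg (by omega), List.reverse_range_eq_of_pos (by omega : 1 ≤ n),
    ← List.append_assoc, prod_map_sAf_append_zero n _ fun a ha => by simp at ha; omega, hj',
    show 2 * n - j - n = n - j by omega, vC, vword, if_neg (by omega), hj', thetaWord]
  simp only [wprod_append, wprod_reverse, hR, hQs, hPQs]
  calc Q * sC n n * (P * Q)⁻¹ * (P * Q * sC n n * (P * Q)⁻¹) * tE n (-eps n 1)
      = Q * (sC n n * sC n n) * Q⁻¹ * P⁻¹ * tE n (-eps n 1) := by group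
    _ = P⁻¹ * tE n (-eps n 1) := by rw [sC_mul_self]; group

theorem rhoC_eq {i : ℕ} (hi : 0 < i) (hi' : i ≤ 2 * n) :
    rhoC n i = vC n i * tE n (-(eps n 1)) := by
  rcases le_or_gt i n with hin | hni
  · exact rhoC_eq_of_le n hi hin
  · exact rhoC_eq_of_lt n hni hi'

theorem xlam_eq (L : List ℕ) (hL : ∀ x ∈ L, 0 < x ∧ x ≤ 2 * n) :
    xlam n L = vlamP n L *
      tE n (-(∑ i ∈ Finset.range L.length,
        ((((L.take i).reverse.map (vC n)).prod)⁻¹ : Equiv.Perm (V n)) (eps n 1))) := by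
  have hrho : L.reverse.map (rhoC n) = L.reverse.map fun a => vC n a * tE n (-(eps n 1)) :=
    List.map_congr_left fun a ha => rhoC_eq n (hL a (List.mem_reverse.1 ha)).1
      (hL a (List.mem_reverse.1 ha)).2
  rw [xlam, hrho, vlamP]
  exact Equiv.Perm.prod_map_mul_addRight _ (fun a => wprod_map_add n _) _ L

end WeylGroup

theorem stmt3_general (n : ℕ) (L : List ℕ) (hL : L ∈ PCset n) :
    xlam n L = vlamP n L *
      tE n (-(∑ i ∈ Finset.range L.length,
        ((((L.take i).reverse.map (vC n)).prod)⁻¹ : Equiv.Perm (V n)) (eps n 1))) :=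
  xlam_eq n L hL.2

/-- writing `x_λ = v(λ) t_{-ξ(λ)}`, we have `v(λ) = v_{λ_l}⋯v_{λ_1}` and
`ξ(λ) = ∑_{i=0}^{l-1} v_{λ_1}⁻¹⋯v_{λ_i}⁻¹ ε_1`. -/
theorem stmt3 (n : ℕ) (hn : 1 ≤ n) (L : List ℕ) (hL : L ∈ PCset n) :
    xlam n L = vlamP n L *
      tE n (-(∑ i ∈ Finset.range L.length,
        ((((L.take i).reverse.map (vC n)).prod)⁻¹ : Equiv.Perm (V n)) (eps n 1))) :=
  stmt3_general n L hL
end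

section
/- In the Weyl group of type C_n, for 1 ≤ i ≤ j ≤ n-1, one has u_{i^*} u_{j^*} = u_{(j+1)^*} u_{i^*} s_{n-1}, where k^* = n+1-k and u_k = s_{n+1-k}⋯s_{n-1}s_n for 1 ≤ k ≤ n. -/
lemma sC_lt_apply (n i : ℕ) (h1 : 1 ≤ i) (h2 : i < n) (x : V n) (c : Fin n) :
    sC n i x c = if (c:ℕ) = i - 1 then x ⟨i, h2⟩
      else if (c:ℕ) = i then x ⟨i-1, by omega⟩ else x c := by
  have h : 1 ≤ i ∧ i < n := ⟨h1, h2⟩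
  simp only [sC, dif_pos h, Equiv.arrowCongr_apply, Equiv.symm_swap, Function.comp_apply,
    Equiv.refl_apply, Equiv.swap_apply_def]
  have hc := c.isLt
  split_ifs <;> (try simp only [Fin.ext_iff, Fin.val_mk] at *) <;>
    exact congrArg x (Fin.ext (by first | omega | (simp only [Fin.val_mk]; omega)))

lemma sC_n_apply (n : ℕ) (hn : 1 ≤ n) (x : V n) (c : Fin n) :
    sC n n x c = if (c:ℕ) + 1 = n then -(x c) else x c := by
  have h : ¬ (1 ≤ n ∧ n < n) := by omega
  simp only [sC, dif_neg h, if_pos rfl, Equiv.piCongrRight_apply, Pi.map_apply]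
  rcases eq_or_ne ((c:ℕ)+1) n with h'|h' <;> simp [h']

lemma uC_succ (n k : ℕ) (h : k ≤ n) : uC n (k+1) = sC n (n-k) * uC n k := by
  have h1 : n + 1 - (k+1) = n - k := by omega
  have h2 : n - k + 1 = n + 1 - k := by omega
  rw [uC, uwordC, h1, List.range'_succ, h2]
  rfl

lemma uC_apply (n k : ℕ) (hn : 1 ≤ n) (hk : k ≤ n) (x : V n) (c : Fin n) :
    uC n k x c = if (c:ℕ) < n - k then x c
      else if (c:ℕ) = n - k then -(x ⟨n-1, by omega⟩)
      else x ⟨(c:ℕ)-1, by omega⟩ := by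
  induction k generalizing x c with
  | zero =>
    have hc := c.isLt
    have : uC n 0 = 1 := by rw [uC, uwordC]; rfl
    rw [this]
    simp only [Equiv.Perm.one_apply]
    rw [if_pos (by omega)]
  | succ k ih =>
    have hc := c.isLt
    rw [uC_succ n k (by omega), Equiv.Perm.mul_apply]
    rcases Nat.eq_zero_or_pos k with hk0 | hk0
    · subst hk0
      simp only [Nat.sub_zero]
      rw [sC_n_apply n hn]
      simp only [ih (by omega)]
      split_ifs <;> (try simp only [Fin.ext_iff, Fin.val_mk] at *) <;>
        first
        | exact congrArg x (Fin.ext (by first | omega | (simp only [Fin.val_mk]; omega)))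
        | exact congrArg (fun t => -(x t)) (Fin.ext (by first | omega | (simp only [Fin.val_mk]; omega)))
        | (exfalso; omega)
    · rw [sC_lt_apply n (n-k) (by omega) (by omega)]
      simp only [ih (by omega)]
      split_ifs <;> (try simp only [Fin.ext_iff, Fin.val_mk] at *) <;>
        first
        | exact congrArg x (Fin.ext (by first | omega | (simp only [Fin.val_mk]; omega)))
        | exact congrArg (fun t => -(x t)) (Fin.ext (by first | omega | (simp only [Fin.val_mk]; omega)))
        | (exfalso; omega)


lemma Vcongr {n : ℕ} (x : V n) {a b : ℕ} {ha : a < n} {hb : b < n} (h : a = b) :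
    x ⟨a, ha⟩ = x ⟨b, hb⟩ := by subst h; rfl

set_option maxHeartbeats 2000000 in
/-- `u_{i^*} u_{j^*} = u_{(j+1)^*} u_{i^*} s_{n-1}` for `1 ≤ i ≤ j ≤ n-1`. -/
theorem stmt9 (n i j : ℕ) (hn : 2 ≤ n) (h1 : 1 ≤ i) (h2 : i ≤ j) (h3 : j ≤ n - 1) :
    uC n (n + 1 - i) * uC n (n + 1 - j)
      = uC n (n + 1 - (j + 1)) * uC n (n + 1 - i) * sC n (n - 1) := by
  apply Equiv.ext
  intro x
  funext c
  have hc := c.isLt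
  simp only [Equiv.Perm.mul_apply]
  simp only [uC_apply n _ (by omega : 1 ≤ n) (by omega : n + 1 - i ≤ n),
    uC_apply n _ (by omega : 1 ≤ n) (by omega : n + 1 - j ≤ n),
    uC_apply n _ (by omega : 1 ≤ n) (by omega : n + 1 - (j+1) ≤ n),
    sC_lt_apply n (n-1) (by omega) (by omega)]
  try simp only [Fin.val_mk]
  split_ifs <;>
    first
    | rfl
    | (exfalso; omega)
    | exact Vcongr x (by omega)
    | exact congrArg Neg.neg (Vcongr x (by omega))
    | (rw [neg_neg]; exact Vcongr x (by omega))
    | exact congrArg x (Fin.ext (by simp only [Fin.val_mk]; omega))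
    | (rw [neg_neg]; exact congrArg x (Fin.ext (by simp only [Fin.val_mk]; omega)))
end
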